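/- arXiv:1804.05540 — 2 statements merged into one kernel-verified Lean document; each statement's English description precedes it below -/
import Mathlib

section
/- Consider the six-component quadratic map p : ℝ² × ℂ⁶ → ℂ⁶ defined by p₁(ξ;Y) = −i(m₅ξ₁Y₅ + m₆ξ₂Y₆)Y₃, p₂(ξ;Y) = −i(m₅ξ₁Y₅ + m₆ξ₂Y₆)Y₄, p₃(ξ;Y) = i(m₅ξ₁conj(Y₅) + m₆ξ₂conj(Y₆))Y₁, p₄(ξ;Y) = i(m₅ξ₁conj(Y₅) + m₆ξ₂conj(Y₆))Y₂, p₅(ξ;Y) = iξ₁{(m₁−m₃)Y₁conj(Y₃) + (m₂−m₄)Y₂conj(Y₄)}, p₆(ξ;Y) = iξ₂{(m₁−m₃)Y₁conj(Y₃) + (m₂−m₄)Y₂conj(Y₄)}, where m₁=m₂=1/(2α), m₃=m₄=1/(2β), m₅=m₆=1/(2γ) for nonzero reals α, β, γ. Let H = diag(2,2,1,1,1,1). Then Im⟨p(ξ;Y), HY⟩ = (1/2)(1/α − 1/β − 1/γ) Re[(Y₁conj(Y₃) + Y₂conj(Y₄))(ξ₁conj(Y₅) + ξ₂conj(Y₆))]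 for all (ξ,Y) ∈ ℝ² × ℂ⁶. -/
open Complex

/-- The quadratic nonlinearity of the Colin–Colin laser-plasma model, with
`m₁ = m₂ = 1/(2α)`, `m₃ = m₄ = 1/(2β)`, `m₅ = m₆ = 1/(2γ)`. -/
noncomputable def ccP (α β γ : ℝ) (ξ : ℝ × ℝ) (Y : Fin 6 → ℂ) : Fin 6 → ℂ :=
  let m1 : ℂ := 1 / (2 * (α : ℂ))
  let m3 : ℂ := 1 / (2 * (β : ℂ))
  let m5 : ℂ := 1 / (2 * (γ : ℂ))
  ![ -Complex.I * (m5 * ξ.1 * Y 4 + m5 * ξ.2 * Y 5) * Y 2,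
     -Complex.I * (m5 * ξ.1 * Y 4 + m5 * ξ.2 * Y 5) * Y 3,
     Complex.I * (m5 * ξ.1 * (starRingEnd ℂ) (Y 4) + m5 * ξ.2 * (starRingEnd ℂ) (Y 5)) * Y 0,
     Complex.I * (m5 * ξ.1 * (starRingEnd ℂ) (Y 4) + m5 * ξ.2 * (starRingEnd ℂ) (Y 5)) * Y 1,
     Complex.I * ξ.1 * ((m1 - m3) * Y 0 * (starRingEnd ℂ) (Y 2)
        + (m1 - m3) * Y 1 * (starRingEnd ℂ) (Y 3)),
     Complex.I * ξ.2 * ((m1 - m3) * Y 0 * (starRingEnd ℂ) (Y 2)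
        + (m1 - m3) * Y 1 * (starRingEnd ℂ) (Y 3)) ]

/-- The diagonal weights of `H = diag(2,2,1,1,1,1)`. -/
noncomputable def ccH : Fin 6 → ℂ := ![2, 2, 1, 1, 1, 1]

set_option maxHeartbeats 4000000 in
/-- `Im⟨p(ξ;Y), HY⟩ = (1/2)(1/α − 1/β − 1/γ)
Re[(Y₁ conj Y₃ + Y₂ conj Y₄)(ξ₁ conj Y₅ + ξ₂ conj Y₆)]`. -/
theorem colin_colin_identity (α β γ : ℝ) (hα : α ≠ 0) (hβ : β ≠ 0) (hγ : γ ≠ 0)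
    (ξ : ℝ × ℝ) (Y : Fin 6 → ℂ) :
    (∑ j, ccP α β γ ξ Y j * (starRingEnd ℂ) (ccH j * Y j)).im =
      (1 / 2) * (1 / α - 1 / β - 1 / γ) *
        ((Y 0 * (starRingEnd ℂ) (Y 2) + Y 1 * (starRingEnd ℂ) (Y 3)) *
          ((ξ.1 : ℂ) * (starRingEnd ℂ) (Y 4) + (ξ.2 : ℂ) * (starRingEnd ℂ) (Y 5))).re := by
  have hA : (1 / (2*(α:ℂ))) = ((1/(2*α) : ℝ) : ℂ) := by push_cast; ring
  have hB : (1 / (2*(β:ℂ))) = ((1/(2*β) : ℝ) : ℂ) := by push_cast; ring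
  have hC : (1 / (2*(γ:ℂ))) = ((1/(2*γ) : ℝ) : ℂ) := by push_cast; ring
  simp only [ccP, ccH, Fin.sum_univ_six, hA, hB, hC, Matrix.cons_val_zero,
    Matrix.cons_val_one, Matrix.head_cons, Matrix.cons_val_two, Matrix.tail_cons,
    Matrix.cons_val_three, Matrix.cons_val_four, Matrix.cons_val_fin_one,
    show (5:Fin 6) = Fin.succ 4 from rfl, Matrix.cons_val_succ]
  simp only [map_mul, map_add, map_sub, map_one, map_ofNat, Complex.conj_conj,
    Complex.conj_ofReal, Complex.add_im, Complex.mul_im, Complex.mul_re,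
    Complex.sub_re, Complex.sub_im, Complex.add_re, Complex.ofReal_re, Complex.ofReal_im,
    Complex.I_re, Complex.I_im, Complex.neg_re, Complex.neg_im, Complex.conj_re, Complex.conj_im,
    Complex.one_re, Complex.one_im, Complex.re_ofNat, Complex.im_ofNat]
  field_simp
  ring
end

section
/- With the same p, H, and masses m_j as in the Colin–Colin system, if 1/α = 1/β + 1/γ then Im⟨p(ξ;Y), H Y⟩ = 0 for all (ξ, Y) ∈ ℝ² × ℂ⁶, i.e., the structural condition (b) holds with H = diag(2,2,1,1,1,1). -/
open Complex

/-!
With `a = ξ₁Y₄ + ξ₂Y₅`, `b = Y₀Ȳ₂ + Y₁Ȳ₃` and `w = a b̄`, the pairing `⟨p(ξ;Y), HY⟩` collapses to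
`i((m₁ - m₃) w̄ + m₅ (w̄ - 2w))`: the weight 2 on the first two components is what makes the
`w`-terms carry the coefficient `-2m₅`. The resonance condition `1/α = 1/β + 1/γ` says exactly
`m₁ - m₃ = m₅`, and then the pairing is `2m₅ · i(w̄ - w) = 4m₅ Im w`, a real number.
-/

open ComplexConjugate

lemma one_div_two_mul_sub_of_resonance {α β γ : ℝ} (hres : 1 / α = 1 / β + 1 / γ) :
    (1 / (2 * α) - 1 / (2 * β) : ℂ) = 1 / (2 * γ) := by
  have h : (1 / α : ℂ) = 1 / β + 1 / γ := by exact_mod_cast hres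
  simp only [one_div, mul_inv] at h ⊢
  linear_combination (2 : ℂ)⁻¹ * h

lemma Complex.I_mul_conj_sub_self (w : ℂ) : I * (conj w - w) = (2 * w.im : ℝ) := by
  rw [← neg_sub, sub_conj]
  push_cast
  ring_nf
  simp [I_sq]

noncomputable def ccCoupling (ξ : ℝ × ℝ) (Y : Fin 6 → ℂ) : ℂ :=
  (ξ.1 * Y 4 + ξ.2 * Y 5) * (conj (Y 0) * Y 2 + conj (Y 1) * Y 3)

lemma sum_ccP_mul_conj_ccH (α β γ : ℝ) (ξ : ℝ × ℝ) (Y : Fin 6 → ℂ) :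
    ∑ j, ccP α β γ ξ Y j * conj (ccH j * Y j) =
      I * ((1 / (2 * α) - 1 / (2 * β) : ℂ) * conj (ccCoupling ξ Y)
        + 1 / (2 * γ) * (conj (ccCoupling ξ Y) - 2 * ccCoupling ξ Y)) := by
  simp only [ccP, ccH, ccCoupling, Fin.sum_univ_six, Matrix.cons_val, map_add, map_mul,
    map_one, map_ofNat, conj_ofReal, conj_conj]
  ring

lemma sum_ccP_mul_conj_ccH_of_resonance {α β γ : ℝ} (hres : 1 / α = 1 / β + 1 / γ)
    (ξ : ℝ × ℝ) (Y : Fin 6 → ℂ) :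
    ∑ j, ccP α β γ ξ Y j * conj (ccH j * Y j) = (2 / γ * (ccCoupling ξ Y).im : ℝ) := by
  rw [sum_ccP_mul_conj_ccH, one_div_two_mul_sub_of_resonance hres]
  calc _ = 2 * (1 / (2 * γ) : ℂ) * (I * (conj (ccCoupling ξ Y) - ccCoupling ξ Y)) := by ring
    _ = _ := by rw [I_mul_conj_sub_self]; push_cast; ring

theorem colin_colin_condition_b_general (α β γ : ℝ)
    (hres : 1 / α = 1 / β + 1 / γ) :
    ∀ (ξ : ℝ × ℝ) (Y : Fin 6 → ℂ),
      (∑ j, ccP α β γ ξ Y j * (starRingEnd ℂ) (ccH j * Y j)).im = 0 := by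
  intro ξ Y
  rw [sum_ccP_mul_conj_ccH_of_resonance hres, ofReal_im]

/-- If `1/α = 1/β + 1/γ` then `Im⟨p(ξ;Y), HY⟩ = 0` for all `(ξ,Y)`:
the structural condition (b) holds for the Colin–Colin system with
`H = diag(2,2,1,1,1,1)`. -/
theorem colin_colin_condition_b (α β γ : ℝ) (hα : α ≠ 0) (hβ : β ≠ 0) (hγ : γ ≠ 0)
    (hres : 1 / α = 1 / β + 1 / γ) :
    ∀ (ξ : ℝ × ℝ) (Y : Fin 6 → ℂ),
      (∑ j, ccP α β γ ξ Y j * (starRingEnd ℂ) (ccH j * Y j)).im = 0 :=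
  colin_colin_condition_b_general α β γ hres
end
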